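/- Let G be a compact Hausdorff topological group, and let μ and ν be irreducible continuous unitary representations of G on finite-dimensional complex Hilbert spaces V^μ and V^ν respectively. Equip V^μ ⊗ V^ν with the inner product determined by ⟨a ⊗ b, a' ⊗ b'⟩ = ⟨a, a'⟩⟨b, b'⟩ and with the tensor product representation (μ ⊗ ν)(x) = μ(x) ⊗ ν(x). Let H be a minimal nontrivial invariant subspace of V^μ ⊗ V^ν whose subrepresentation occurs with multiplicity one in μ ⊗ ν, let P_H be the orthogonal projection of V^μ ⊗ V^ν onto H, and let {e_ℓ : 1 ≤ ℓ ≤ dim V^ν} be an orthonormal basis of V^ν. Then for every v ∈ V^μ, ∑_{ℓ=1}^{dim V^ν} ‖P_H(v ⊗ e_ℓ)‖² = (dim_ℂ H / dim_ℂ V^μ) · ‖v‖². -/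

import Mathlib

/-!
Let `T` be the partial trace over `Vν` of the projection `P_H`, so that
`⟪v, T v⟫ = ∑ ℓ, ‖P_H (v ⊗ e ℓ)‖²`. The partial trace does not depend on the orthonormal basis
of `Vν` used to compute it, so, `P_H` commuting with `μ ⊗ ν`, the operator `T` commutes with `μ`;
by Schur's lemma `T = c • id`. Taking traces, `c · dim Vμ = tr T = tr P_H = dim H`.
-/

local notation "⟪" x ", " y "⟫" => @inner ℂ _ _ x y

/-- A submodule is invariant under a unitary representation. -/
def Invariant {G V : Type*} [Group G] [NormedAddCommGroup V] [InnerProductSpace ℂ V]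
    (π : G →* (V ≃ₗᵢ[ℂ] V)) (H : Submodule ℂ V) : Prop :=
  ∀ (x : G) (v : V), v ∈ H → π x v ∈ H

/-- A submodule is a minimal nontrivial invariant subspace. -/
def MinimalInvariant {G V : Type*} [Group G] [NormedAddCommGroup V] [InnerProductSpace ℂ V]
    (π : G →* (V ≃ₗᵢ[ℂ] V)) (H : Submodule ℂ V) : Prop :=
  H ≠ ⊥ ∧ ∀ H' : Submodule ℂ V, Invariant π H' → H' ≤ H → H' = ⊥ ∨ H' = H

/-- A representation is irreducible. -/
def Irreducible' {G V : Type*} [Group G] [NormedAddCommGroup V] [InnerProductSpace ℂ V]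
    (π : G →* (V ≃ₗᵢ[ℂ] V)) : Prop :=
  (⊤ : Submodule ℂ V) ≠ ⊥ ∧ ∀ H : Submodule ℂ V, Invariant π H → H = ⊥ ∨ H = ⊤

/-- There is a `G`-equivariant unitary isomorphism between the invariant subspaces
`H` and `H'`. -/
def EquivariantUnitaryIso {G V : Type*} [Group G] [NormedAddCommGroup V]
    [InnerProductSpace ℂ V] (π : G →* (V ≃ₗᵢ[ℂ] V)) (H H' : Submodule ℂ V) : Prop :=
  ∃ U : H ≃ₗᵢ[ℂ] H', ∀ (x : G) (v w : H), (w : V) = π x (v : V) →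
    ((U w : V)) = π x ((U v : V))

/-- The subrepresentation on the minimal invariant subspace `H` occurs with multiplicity one. -/
def MultiplicityOne {G V : Type*} [Group G] [NormedAddCommGroup V] [InnerProductSpace ℂ V]
    (π : G →* (V ≃ₗᵢ[ℂ] V)) (H : Submodule ℂ V) : Prop :=
  ∀ H' : Submodule ℂ V, Invariant π H' → MinimalInvariant π H' →
    EquivariantUnitaryIso π H H' → H' = H

open Module LinearMap

section Representation

variable {G V : Type*} [Group G] [NormedAddCommGroup V] [InnerProductSpace ℂ V]
  {π : G →* (V ≃ₗᵢ[ℂ] V)}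

theorem Invariant.starProjection_apply_comm {H : Submodule ℂ V} [H.HasOrthogonalProjection]
    (hH : Invariant π H) (x : G) (w : V) :
    H.starProjection (π x w) = π x (H.starProjection w) := by
  refine H.eq_starProjection_of_mem_of_inner_eq_zero (hH x _ (H.starProjection_apply_mem w))
    fun u hu => ?_
  have hxu : π x (π x⁻¹ u) = u := by
    rw [map_inv, LinearIsometryEquiv.coe_inv, LinearIsometryEquiv.apply_symm_apply]
  calc ⟪π x w - π x (H.starProjection w), u⟫
      = ⟪π x (w - H.starProjection w), π x (π x⁻¹ u)⟫ := by rw [map_sub, hxu]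
    _ = ⟪w - H.starProjection w, π x⁻¹ u⟫ := (π x).inner_map_map _ _
    _ = 0 := H.starProjection_inner_eq_zero _ _ (hH _ _ hu)

theorem Irreducible'.nontrivial (hπ : Irreducible' π) : Nontrivial V := by
  by_contra h
  rw [not_nontrivial_iff_subsingleton] at h
  exact hπ.1 (Subsingleton.elim _ _)

theorem Irreducible'.exists_eq_smul_id [FiniteDimensional ℂ V] (hπ : Irreducible' π)
    {T : V →ₗ[ℂ] V} (hT : ∀ (x : G) (v : V), T (π x v) = π x (T v)) :
    ∃ c : ℂ, T = c • LinearMap.id := by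
  have := hπ.nontrivial
  obtain ⟨c, hc⟩ := Module.End.exists_eigenvalue T
  have hinv : Invariant π (Module.End.eigenspace T c) := by
    intro x v hv
    rw [Module.End.mem_eigenspace_iff] at hv ⊢
    rw [hT, hv, map_smul]
  refine ⟨c, LinearMap.ext fun v => ?_⟩
  have hv : v ∈ Module.End.eigenspace T c := by
    rcases hπ.2 _ hinv with h | h
    · exact absurd h hc
    · exact h ▸ Submodule.mem_top
  exact Module.End.mem_eigenspace_iff.mp hv

end Representation

theorem Submodule.trace_starProjection {𝕜 E : Type*} [RCLike 𝕜] [NormedAddCommGroup E]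
    [InnerProductSpace 𝕜 E] [FiniteDimensional 𝕜 E] (K : Submodule 𝕜 E) :
    trace 𝕜 E K.starProjection = finrank 𝕜 K := by
  have hid : (K.orthogonalProjectionOnto : E →ₗ[𝕜] K) ∘ₗ K.subtype = LinearMap.id :=
    LinearMap.ext K.orthogonalProjectionOnto_mem_subspace_eq_self
  change trace 𝕜 E (K.subtype ∘ₗ (K.orthogonalProjectionOnto : E →ₗ[𝕜] K)) = _
  rw [trace_comp_comm', hid, trace_id]

section PartialTrace

variable {𝕜 Vμ Vν W ι κ : Type*} [RCLike 𝕜]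
  [NormedAddCommGroup Vμ] [InnerProductSpace 𝕜 Vμ] [NormedAddCommGroup Vν] [InnerProductSpace 𝕜 Vν]
  [NormedAddCommGroup W] [InnerProductSpace 𝕜 W] [Fintype ι] [Fintype κ]

variable (t : Vμ →ₗ[𝕜] Vν →ₗ[𝕜] W) (e : OrthonormalBasis ι 𝕜 Vν)

theorem orthonormal_tensor
    (ht : ∀ (a a' : Vμ) (b b' : Vν), inner 𝕜 (t a b) (t a' b') = inner 𝕜 a a' * inner 𝕜 b b')
    (f : OrthonormalBasis κ 𝕜 Vμ) : Orthonormal 𝕜 fun p : κ × ι => t (f p.1) (e p.2) := by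
  classical
  rw [orthonormal_iff_ite]
  rintro ⟨k, ℓ⟩ ⟨k', ℓ'⟩
  simp only [ht, orthonormal_iff_ite.mp f.orthonormal, orthonormal_iff_ite.mp e.orthonormal,
    Prod.mk.injEq, ite_zero_mul_ite_zero, mul_one]

theorem span_range_tensor (ht : Submodule.span 𝕜 {w : W | ∃ a b, t a b = w} = ⊤)
    (f : OrthonormalBasis κ 𝕜 Vμ) :
    Submodule.span 𝕜 (Set.range fun p : κ × ι => t (f p.1) (e p.2)) = ⊤ := by
  refine eq_top_iff.mpr (ht ▸ Submodule.span_le.mpr ?_)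
  rintro _ ⟨a, b, rfl⟩
  rw [← f.sum_repr a, ← e.sum_repr b]
  simp only [map_sum, map_smul, LinearMap.sum_apply, LinearMap.smul_apply]
  exact Submodule.sum_mem _ fun ℓ _ => Submodule.smul_mem _ _ <| Submodule.sum_mem _ fun k _ =>
    Submodule.smul_mem _ _ <| Submodule.subset_span ⟨(k, ℓ), rfl⟩

variable [FiniteDimensional 𝕜 Vμ] [FiniteDimensional 𝕜 W]

/-- The partial trace over `Vν`, with `W` standing for `Vμ ⊗ Vν` through `t`. -/
noncomputable def partialTrace (S : W →ₗ[𝕜] W) : Vμ →ₗ[𝕜] Vμ :=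
  ∑ ℓ, adjoint (t.flip (e ℓ)) ∘ₗ S ∘ₗ t.flip (e ℓ)

variable (S : W →ₗ[𝕜] W)

theorem inner_partialTrace_apply (a b : Vμ) :
    inner 𝕜 a (partialTrace t e S b) = ∑ ℓ, inner 𝕜 (t a (e ℓ)) (S (t b (e ℓ))) := by
  simp only [partialTrace, LinearMap.sum_apply, comp_apply, inner_sum, adjoint_inner_right,
    flip_apply]

theorem trace_partialTrace
    (ht_inner : ∀ (a a' : Vμ) (b b' : Vν), inner 𝕜 (t a b) (t a' b') = inner 𝕜 a a' * inner 𝕜 b b')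
    (ht_span : Submodule.span 𝕜 {w : W | ∃ a b, t a b = w} = ⊤) :
    trace 𝕜 Vμ (partialTrace t e S) = trace 𝕜 W S := by
  let f := stdOrthonormalBasis 𝕜 Vμ
  let fe := OrthonormalBasis.mk (orthonormal_tensor t e ht_inner f)
    (span_range_tensor t e ht_span f).ge
  rw [trace_eq_sum_inner _ f, trace_eq_sum_inner S fe, Fintype.sum_prod_type]
  simp only [fe, OrthonormalBasis.coe_mk, inner_partialTrace_apply]

theorem inner_partialTrace_starProjection_self (K : Submodule 𝕜 W) [K.HasOrthogonalProjection]
    (a : Vμ) :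
    inner 𝕜 a (partialTrace t e K.starProjection a) =
      ((∑ ℓ, ‖K.starProjection (t a (e ℓ))‖ ^ 2 : ℝ) : 𝕜) := by
  have hproj (w : W) : inner 𝕜 w (K.starProjection w) = (‖K.starProjection w‖ ^ 2 : 𝕜) :=
    calc inner 𝕜 w (K.starProjection w)
        = inner 𝕜 w (K.starProjection (K.starProjection w)) := by
          rw [K.starProjection_eq_self_iff.mpr (K.starProjection_apply_mem w)]
      _ = inner 𝕜 (K.starProjection w) (K.starProjection w) :=
          (K.inner_starProjection_left_eq_right _ _).symm
      _ = ‖K.starProjection w‖ ^ 2 := inner_self_eq_norm_sq_to_K _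
  push_cast
  simp only [inner_partialTrace_apply, ContinuousLinearMap.coe_coe, hproj]

variable [FiniteDimensional 𝕜 Vν]

theorem inner_partialTrace_eq_trace (a b : Vμ) :
    inner 𝕜 a (partialTrace t e S b) = trace 𝕜 Vν (adjoint (t a) ∘ₗ S ∘ₗ t b) := by
  simp only [inner_partialTrace_apply, trace_eq_sum_inner _ e, comp_apply, adjoint_inner_right]

theorem partialTrace_eq_of_orthonormalBasis (e' : OrthonormalBasis κ 𝕜 Vν) :
    partialTrace t e S = partialTrace t e' S :=
  ext fun b => ext_inner_left 𝕜 fun a => by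
    rw [inner_partialTrace_eq_trace, inner_partialTrace_eq_trace]

theorem partialTrace_apply_comm {G : Type*} [Group G] {μ : G →* (Vμ ≃ₗᵢ[𝕜] Vμ)}
    {ν : G →* (Vν ≃ₗᵢ[𝕜] Vν)} {ρ : G →* (W ≃ₗᵢ[𝕜] W)}
    (hρ : ∀ (x : G) (a : Vμ) (b : Vν), ρ x (t a b) = t (μ x a) (ν x b))
    (hS : ∀ (x : G) (w : W), S (ρ x w) = ρ x (S w)) (x : G) (b : Vμ) :
    partialTrace t e S (μ x b) = μ x (partialTrace t e S b) := by
  refine ext_inner_left 𝕜 fun u => ?_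
  obtain ⟨a, rfl⟩ := (μ x).surjective u
  calc inner 𝕜 (μ x a) (partialTrace t e S (μ x b))
      = inner 𝕜 (μ x a) (partialTrace t (e.map (ν x)) S (μ x b)) := by
        rw [partialTrace_eq_of_orthonormalBasis t e S (e.map (ν x))]
    _ = inner 𝕜 a (partialTrace t e S b) := by
        simp only [inner_partialTrace_apply, OrthonormalBasis.map_apply, ← hρ, hS,
          LinearIsometryEquiv.inner_map_map]
    _ = inner 𝕜 (μ x a) (μ x (partialTrace t e S b)) :=
        (LinearIsometryEquiv.inner_map_map _ _ _).symm

end PartialTrace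

theorem tensor_multiplicity_one_projection_sum_general
    {G Vμ Vν W : Type*} [Group G]
    [NormedAddCommGroup Vμ] [InnerProductSpace ℂ Vμ] [FiniteDimensional ℂ Vμ]
    [NormedAddCommGroup Vν] [InnerProductSpace ℂ Vν] [FiniteDimensional ℂ Vν]
    [NormedAddCommGroup W] [InnerProductSpace ℂ W] [FiniteDimensional ℂ W]
    (μrep : G →* (Vμ ≃ₗᵢ[ℂ] Vμ))
    (hμirr : Irreducible' μrep)
    (νrep : G →* (Vν ≃ₗᵢ[ℂ] Vν))
    (t : Vμ →ₗ[ℂ] Vν →ₗ[ℂ] W)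
    (ht_inner : ∀ (a a' : Vμ) (b b' : Vν), ⟪t a b, t a' b'⟫ = ⟪a, a'⟫ * ⟪b, b'⟫)
    (ht_span : Submodule.span ℂ {w : W | ∃ a b, t a b = w} = ⊤)
    (ρ : G →* (W ≃ₗᵢ[ℂ] W))
    (hρ : ∀ (x : G) (a : Vμ) (b : Vν), ρ x (t a b) = t (μrep x a) (νrep x b))
    (H : Submodule ℂ W) (hHinv : Invariant ρ H)
    (e : OrthonormalBasis (Fin (Module.finrank ℂ Vν)) ℂ Vν) (v : Vμ) :
    ∑ ℓ, ‖(Submodule.orthogonalProjectionOnto H (t v (e ℓ)) : W)‖ ^ 2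
      = ((Module.finrank ℂ H : ℝ) / (Module.finrank ℂ Vμ : ℝ)) * ‖v‖ ^ 2 := by
  obtain ⟨c, hc⟩ := hμirr.exists_eq_smul_id
    (partialTrace_apply_comm t e _ hρ hHinv.starProjection_apply_comm)
  have htrace : c * finrank ℂ Vμ = finrank ℂ H := by
    have := trace_partialTrace t e (H.starProjection : W →ₗ[ℂ] W) ht_inner ht_span
    rwa [hc, map_smul, trace_id, H.trace_starProjection] at this
  have hdim : (finrank ℂ Vμ : ℂ) ≠ 0 := by
    have := hμirr.nontrivial
    exact_mod_cast finrank_pos.ne'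
  have hquad := inner_partialTrace_starProjection_self t e H v
  rw [hc, LinearMap.smul_apply, id_apply, inner_smul_right, inner_self_eq_norm_sq_to_K,
    eq_div_of_mul_eq hdim htrace] at hquad
  simp only [← H.starProjection_apply]
  exact RCLike.ofReal_injective (K := ℂ) (by push_cast at hquad ⊢; exact hquad.symm)

/-- **Clebsch–Gordan type lemma.**  Let `μrep` and `νrep` be irreducible continuous unitary
representations of a compact group `G` on finite-dimensional complex Hilbert spaces `Vμ`, `Vν`.
The Hilbert space tensor product `Vμ ⊗ Vν` is encoded as a finite-dimensional Hilbert
space `W` together with a bilinear map `t : Vμ → Vν → W` whose image spans `W` and which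
multiplies inner products, carrying the tensor product representation `ρ`.  If `H` is a
minimal nontrivial invariant subspace of `W` occurring with multiplicity one in `ρ`, `P_H` is
the orthogonal projection onto `H`, and `(e ℓ)` is an orthonormal basis of `Vν`, then
`∑ ℓ, ‖P_H (v ⊗ e ℓ)‖² = (dim H / dim Vμ) · ‖v‖²` for all `v ∈ Vμ`. -/
theorem tensor_multiplicity_one_projection_sum
    {G Vμ Vν W : Type*} [Group G] [TopologicalSpace G] [IsTopologicalGroup G] [CompactSpace G]
    [T2Space G]
    [NormedAddCommGroup Vμ] [InnerProductSpace ℂ Vμ] [FiniteDimensional ℂ Vμ]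
    [NormedAddCommGroup Vν] [InnerProductSpace ℂ Vν] [FiniteDimensional ℂ Vν]
    [NormedAddCommGroup W] [InnerProductSpace ℂ W] [FiniteDimensional ℂ W]
    (μrep : G →* (Vμ ≃ₗᵢ[ℂ] Vμ)) (hμcont : ∀ v : Vμ, Continuous fun x => μrep x v)
    (hμirr : Irreducible' μrep)
    (νrep : G →* (Vν ≃ₗᵢ[ℂ] Vν)) (hνcont : ∀ v : Vν, Continuous fun x => νrep x v)
    (hνirr : Irreducible' νrep)
    (t : Vμ →ₗ[ℂ] Vν →ₗ[ℂ] W)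
    (ht_inner : ∀ (a a' : Vμ) (b b' : Vν), ⟪t a b, t a' b'⟫ = ⟪a, a'⟫ * ⟪b, b'⟫)
    (ht_span : Submodule.span ℂ {w : W | ∃ a b, t a b = w} = ⊤)
    (ρ : G →* (W ≃ₗᵢ[ℂ] W))
    (hρ : ∀ (x : G) (a : Vμ) (b : Vν), ρ x (t a b) = t (μrep x a) (νrep x b))
    (H : Submodule ℂ W) (hHinv : Invariant ρ H) (hHmin : MinimalInvariant ρ H)
    (hHmult : MultiplicityOne ρ H)
    (e : OrthonormalBasis (Fin (Module.finrank ℂ Vν)) ℂ Vν) (v : Vμ) :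
    ∑ ℓ, ‖(Submodule.orthogonalProjectionOnto H (t v (e ℓ)) : W)‖ ^ 2
      = ((Module.finrank ℂ H : ℝ) / (Module.finrank ℂ Vμ : ℝ)) * ‖v‖ ^ 2 :=
  tensor_multiplicity_one_projection_sum_general μrep hμirr νrep t ht_inner ht_span ρ hρ H hHinv e v
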